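/- arXiv:2209.04373 — 3 statements merged into one kernel-verified Lean document; each statement's English description precedes it below -/
import Mathlib

section
/- For any x, y ∈ ℝ^n, the vector x↓ + y↑ is majorized by the vector x↓ + y, where addition is componentwise, x↓ is x sorted nonincreasingly and y↑ is y sorted nondecreasingly. -/
open Finset

/-- Nondecreasing rearrangement of a finite vector. -/
def sortAsc {n : ℕ} {α : Type*} [LinearOrder α] (x : Fin n → α) : Fin n → α :=
  x ∘ Tuple.sort x

/-- Nonincreasing rearrangement of a finite vector. -/
def sortDesc {n : ℕ} {α : Type*} [LinearOrder α] (x : Fin n → α) : Fin n → α :=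
  fun i => sortAsc x i.rev

/-- Sum of the entries of `f` at positions `< k`. -/
def psum {n : ℕ} {α : Type*} [AddCommMonoid α] (f : Fin n → α) (k : ℕ) : α :=
  ∑ i : Fin n, if (i : ℕ) < k then f i else 0

/-- `x` is majorized by `y`: every partial sum of the `k` largest entries of `x`
is at most that of `y`, and the total sums agree. -/
def Maj {n : ℕ} {α : Type*} [AddCommMonoid α] [LinearOrder α] [IsOrderedAddMonoid α] (x y : Fin n → α) : Prop :=
  (∀ k : ℕ, psum (sortDesc x) k ≤ psum (sortDesc y) k) ∧ (∑ i, x i) = ∑ i, y i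

/-- Weak submajorization: the sum of the `k` largest entries of `x` is at most
that of `y`, for every `k`. -/
def WeakSub {n : ℕ} {α : Type*} [AddCommMonoid α] [LinearOrder α] [IsOrderedAddMonoid α] (x y : Fin n → α) : Prop :=
  ∀ k : ℕ, psum (sortDesc x) k ≤ psum (sortDesc y) k

/-- Weak supermajorization: the sum of the `k` smallest entries of `x` is at least
that of `y`, for every `k`. -/
def WeakSuper {n : ℕ} {α : Type*} [AddCommMonoid α] [LinearOrder α] [IsOrderedAddMonoid α] (x y : Fin n → α) : Prop :=
  ∀ k : ℕ, psum (sortAsc y) k ≤ psum (sortAsc x) k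

/-!
The sum of the `k` largest entries of a vector is the maximum of `∑ i ∈ S, u i` over index sets `S`
of a fixed size, so it is a convex function of `u` that is invariant under rearrangements. If
`a` is antitone and `i < j` is an inversion of `z`, then swapping `z i` and `z j` in `a + z` yields a
convex combination of `a + z` and a rearrangement of it, so the top-`k` sums can only decrease.
Among all rearrangements of `y` violating the claim, one maximizing `∑ i, i * z i` would admit such
a swap to a rearrangement with a larger weighted sum, while a rearrangement without inversions is `y↑`.
-/

section Sorting

variable {α : Type*} [LinearOrder α] {n : ℕ}

lemma sortAsc_comp_perm (u : Fin n → α) (σ : Equiv.Perm (Fin n)) :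
    sortAsc (u ∘ σ) = sortAsc u :=
  Tuple.comp_perm_comp_sort_eq_comp_sort

lemma sortDesc_comp_perm (u : Fin n → α) (σ : Equiv.Perm (Fin n)) :
    sortDesc (u ∘ σ) = sortDesc u := by
  unfold sortDesc
  rw [sortAsc_comp_perm]

lemma sortAsc_eq_self_of_monotone {u : Fin n → α} (hu : Monotone u) : sortAsc u = u := by
  rw [sortAsc, Tuple.sort_eq_refl_iff_monotone.mpr hu]
  rfl

lemma antitone_sortDesc (u : Fin n → α) : Antitone (sortDesc u) :=
  fun _ _ hij => Tuple.monotone_sort u (Fin.rev_le_rev.mpr hij)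

end Sorting

section TopSums

variable {α : Type*} [AddCommMonoid α] [LinearOrder α] {n : ℕ}

-- The positions of the `k` largest entries of an ascending tuple.
def lastIndices (n k : ℕ) : Finset (Fin n) := univ.filter fun i => n - k ≤ (i : ℕ)

lemma psum_sortDesc_eq_sum_lastIndices (u : Fin n → α) (k : ℕ) :
    psum (sortDesc u) k = ∑ i ∈ lastIndices n k, u (Tuple.sort u i) := by
  rw [psum, ← Equiv.sum_comp Fin.revPerm, lastIndices, sum_filter]
  refine sum_congr rfl fun i _ => if_congr ?_ (by simp [sortDesc, sortAsc]) rfl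
  simp only [Fin.revPerm_apply, Fin.val_rev]
  omega

lemma exists_card_eq_psum_sortDesc_eq_sum (u : Fin n → α) (k : ℕ) :
    ∃ S : Finset (Fin n), S.card = (lastIndices n k).card ∧ psum (sortDesc u) k = ∑ i ∈ S, u i :=
  ⟨(lastIndices n k).map (Tuple.sort u).toEmbedding, card_map _,
    by rw [psum_sortDesc_eq_sum_lastIndices, sum_map]; rfl⟩

lemma sum_sortAsc (u : Fin n → α) : ∑ i, sortAsc u i = ∑ i, u i :=
  Equiv.sum_comp (Tuple.sort u) u

variable [IsOrderedAddMonoid α]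

lemma sum_le_sum_of_card_eq_of_forall_le {ι : Type*} {g : ι → α} {A B : Finset ι}
    (hcard : A.card = B.card) (hle : ∀ a ∈ A, ∀ b ∈ B, g a ≤ g b) :
    ∑ i ∈ A, g i ≤ ∑ i ∈ B, g i := by
  rcases A.eq_empty_or_nonempty with rfl | hA
  · simp [card_eq_zero.mp hcard.symm]
  calc ∑ i ∈ A, g i ≤ A.card • A.sup' hA g := sum_le_card_nsmul _ _ _ fun a ha => le_sup' g ha
    _ = B.card • A.sup' hA g := by rw [hcard]
    _ ≤ ∑ i ∈ B, g i :=
      card_nsmul_le_sum _ _ _ fun b hb => sup'_le hA g fun a ha => hle a ha b hb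

lemma sum_le_sum_lastIndices_of_monotone {g : Fin n → α} (hg : Monotone g) {k : ℕ}
    {S : Finset (Fin n)} (hS : S.card = (lastIndices n k).card) :
    ∑ i ∈ S, g i ≤ ∑ i ∈ lastIndices n k, g i := by
  set T := lastIndices n k
  have hcard : (S \ T).card = (T \ S).card := by
    have := card_sdiff_add_card_inter S T
    have := card_sdiff_add_card_inter T S
    rw [inter_comm] at this
    omega
  have hsdiff : ∑ i ∈ S \ T, g i ≤ ∑ i ∈ T \ S, g i := by
    refine sum_le_sum_of_card_eq_of_forall_le hcard fun a ha b hb => hg ?_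
    simp only [T, lastIndices, mem_sdiff, mem_filter, mem_univ, true_and] at ha hb
    exact Fin.le_iff_val_le_val.mpr (by omega)
  rw [← sum_inter_add_sum_sdiff S T, ← sum_inter_add_sum_sdiff T S, inter_comm]
  exact add_le_add_right hsdiff _

lemma sum_le_psum_sortDesc (u : Fin n → α) {k : ℕ} {S : Finset (Fin n)}
    (hS : S.card = (lastIndices n k).card) : ∑ i ∈ S, u i ≤ psum (sortDesc u) k := by
  let σ := Tuple.sort u
  have hSσ : ∑ i ∈ S, u i = ∑ i ∈ S.map σ.symm.toEmbedding, u (σ i) := by simp [sum_map]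
  rw [psum_sortDesc_eq_sum_lastIndices, hSσ]
  refine sum_le_sum_lastIndices_of_monotone (Tuple.monotone_sort u) ?_
  rw [card_map, hS]

end TopSums

section Rearrangement

variable {𝕜 : Type*} [Field 𝕜] [LinearOrder 𝕜] [IsStrictOrderedRing 𝕜] {n : ℕ}

lemma psum_sortDesc_le_of_eq_convexComb_perm {u v : Fin n → 𝕜} (σ : Equiv.Perm (Fin n)) {t : 𝕜}
    (ht₀ : 0 ≤ t) (ht₁ : t ≤ 1) (huv : ∀ i, u i = t * v i + (1 - t) * v (σ i)) (k : ℕ) :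
    psum (sortDesc u) k ≤ psum (sortDesc v) k := by
  obtain ⟨S, hS, hu⟩ := exists_card_eq_psum_sortDesc_eq_sum u k
  have hv := sum_le_psum_sortDesc v hS
  have hvσ := sum_le_psum_sortDesc (v ∘ σ) hS
  rw [sortDesc_comp_perm] at hvσ
  calc psum (sortDesc u) k = t * ∑ i ∈ S, v i + (1 - t) * ∑ i ∈ S, (v ∘ σ) i := by
        simp only [hu, huv, sum_add_distrib, mul_sum, Function.comp_apply]
    _ ≤ t * psum (sortDesc v) k + (1 - t) * psum (sortDesc v) k := by
        gcongr
    _ = psum (sortDesc v) k := by ring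

lemma psum_sortDesc_add_comp_swap_le {a z : Fin n → 𝕜} (ha : Antitone a) {i j : Fin n}
    (hij : i < j) (hz : z j < z i) (k : ℕ) :
    psum (sortDesc fun l => a l + (z ∘ Equiv.swap i j) l) k ≤
      psum (sortDesc fun l => a l + z l) k := by
  have hD : 0 < a i - a j + (z i - z j) := by linarith [ha hij.le]
  -- `t` makes `t * (a i + z i) + (1 - t) * (a j + z j)` equal to `a i + z j`.
  refine psum_sortDesc_le_of_eq_convexComb_perm (Equiv.swap i j)
    (t := (a i - a j) / (a i - a j + (z i - z j)))
    (div_nonneg (by linarith [ha hij.le]) hD.le) ((div_le_one hD).mpr (by linarith)) (fun l => ?_) k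
  rcases eq_or_ne l i with rfl | hli
  · simp only [Function.comp_apply, Equiv.swap_apply_left]
    field_simp
    ring
  rcases eq_or_ne l j with rfl | hlj
  · simp only [Function.comp_apply, Equiv.swap_apply_right]
    field_simp
    ring
  simp only [Function.comp_apply, Equiv.swap_apply_of_ne_of_ne hli hlj]
  ring

def weightedSum (z : Fin n → 𝕜) : 𝕜 := ∑ i : Fin n, ((i : ℕ) : 𝕜) * z i

lemma weightedSum_lt_comp_swap {z : Fin n → 𝕜} {i j : Fin n} (hij : i < j) (hz : z j < z i) :
    weightedSum z < weightedSum (z ∘ Equiv.swap i j) := by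
  have hdiff : weightedSum (z ∘ Equiv.swap i j) - weightedSum z =
      ((j : ℕ) - (i : ℕ) : 𝕜) * (z i - z j) := by
    rw [weightedSum, weightedSum, ← sum_sub_distrib,
      sum_eq_add_of_mem i j (mem_univ i) (mem_univ j) hij.ne fun l _ hl => by
        simp [Equiv.swap_apply_of_ne_of_ne hl.1 hl.2]]
    simp only [Function.comp_apply, Equiv.swap_apply_left, Equiv.swap_apply_right]
    ring
  have hij' : ((i : ℕ) : 𝕜) < (j : ℕ) := by exact_mod_cast hij
  have := mul_pos (sub_pos.mpr hij') (sub_pos.mpr hz)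
  linarith

lemma psum_sortDesc_add_sortAsc_le {a : Fin n → 𝕜} (ha : Antitone a) (z : Fin n → 𝕜) (k : ℕ) :
    psum (sortDesc fun i => a i + sortAsc z i) k ≤ psum (sortDesc fun i => a i + z i) k := by
  let P : Equiv.Perm (Fin n) → Prop := fun π =>
    psum (sortDesc fun i => a i + sortAsc z i) k ≤ psum (sortDesc fun i => a i + (z ∘ π) i) k
  suffices ∀ π, P π from this 1
  by_contra! hfail
  obtain ⟨π, hπ, hmax⟩ := (univ.filter fun π => ¬ P π).exists_max_image
    (fun π => weightedSum (z ∘ π)) (by simpa [Finset.Nonempty] using hfail)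
  rw [mem_filter] at hπ
  by_cases hmono : Monotone (z ∘ π)
  · refine hπ.2 (le_of_eq ?_)
    rw [← sortAsc_comp_perm z π, sortAsc_eq_self_of_monotone hmono]
  obtain ⟨i, j, hij, hzij⟩ : ∃ i j, i ≤ j ∧ (z ∘ π) j < (z ∘ π) i := by
    simpa [Monotone] using hmono
  have hij : i < j := hij.lt_of_ne (by rintro rfl; exact lt_irrefl _ hzij)
  have hswap : P (π * Equiv.swap i j) := by
    by_contra h
    exact (weightedSum_lt_comp_swap hij hzij).not_ge (hmax _ (mem_filter.mpr ⟨mem_univ _, h⟩))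
  exact hπ.2 (hswap.trans (psum_sortDesc_add_comp_swap_le ha hij hzij k))

end Rearrangement

theorem stmt_5 {n : ℕ} (x y : Fin n → ℝ) :
    Maj (fun i => sortDesc x i + sortAsc y i) (fun i => sortDesc x i + y i) :=
  ⟨psum_sortDesc_add_sortAsc_le (antitone_sortDesc x) y, by
    simp only [sum_add_distrib, sum_sortAsc]⟩
end

section
/- Given r ∈ ℕ^m and c ∈ ℕ^n, there exists an m×n (0,1)-matrix A with row sums exactly r_i for each i and column sums at most c_j for each j if and only if c is weakly supermajorized by r*, the partition conjugate of r. -/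
open Finset

/-- Partition conjugate of `r ∈ ℕ^m`, taken with dimension `n`:
its `j`-th entry (1-indexed `j+1`) counts the indices `i` with `r i ≥ j+1`. -/
def conj {m : ℕ} (r : Fin m → ℕ) (n : ℕ) : Fin n → ℕ :=
  fun j => (Finset.univ.filter fun i => (j : ℕ) + 1 ≤ r i).card

/-!
A row with `r i` ones has at most `n - #S` of them outside a set `S` of columns, so a matrix as in
the theorem satisfies the cut condition `∑ i, (r i - (n - #S)) ≤ ∑ j ∈ S, c j`. For `#S = k` the
left side is the sum of the `k` smallest entries of `r*` (these are its last `k` entries), and the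
smallest possible right side is the sum of the `k` smallest entries of `c`; so the cut condition is
exactly `c ≺ʷ r*`. Conversely, filling the first column with `min (c 0) #{i | 0 < r i}` ones in
the rows with the largest `r i` and deleting it preserves the cut condition, and induction on the
number of columns builds the matrix.
-/

section SortedPartialSums

lemma sum_le_sum_of_forall_le_of_card_eq {ι α : Type*} [DecidableEq ι] [AddCommMonoid α]
    [PartialOrder α] [IsOrderedAddMonoid α] {x : ι → α} {T S : Finset ι}
    (hT : ∀ j ∈ T, ∀ j' ∉ T, x j ≤ x j') (hcard : #T = #S) :
    ∑ j ∈ T, x j ≤ ∑ j ∈ S, x j := by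
  let e := Finset.equivOfCardEq (card_sdiff_comm hcard)
  have hdiff : ∑ j ∈ T \ S, x j ≤ ∑ j ∈ S \ T, x j := by
    rw [← sum_coe_sort (T \ S), ← sum_coe_sort (S \ T), ← e.sum_comp]
    exact sum_le_sum fun a _ => hT _ (mem_sdiff.1 a.2).1 _ (mem_sdiff.1 (e a).2).2
  rw [← sum_inter_add_sum_sdiff T S, ← sum_inter_add_sum_sdiff S T, inter_comm]
  gcongr

variable {n : ℕ} {α : Type*} [AddCommMonoid α]

lemma psum_eq_sum_of_le (f : Fin n → α) {k : ℕ} (hk : n ≤ k) : psum f k = ∑ i, f i :=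
  sum_congr rfl fun i _ => if_pos (i.isLt.trans_le hk)

lemma exists_psum_sortAsc_eq_sum [LinearOrder α] (x : Fin n → α) {k : ℕ} (hk : k ≤ n) :
    ∃ T : Finset (Fin n), #T = k ∧ (∀ j ∈ T, ∀ j' ∉ T, x j ≤ x j') ∧
      psum (sortAsc x) k = ∑ j ∈ T, x j := by
  let σ := Tuple.sort x
  refine ⟨({i | (i : ℕ) < k} : Finset (Fin n)).map σ.toEmbedding, ?_, ?_, ?_⟩
  · simp [Fin.card_filter_val_lt, hk]
  · simp only [mem_map_equiv, mem_filter, mem_univ, true_and, not_lt]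
    intro j hj j' hj'
    simpa [σ] using Tuple.monotone_sort x (show σ.symm j ≤ σ.symm j' by omega)
  · rw [psum, sum_map, sum_filter]
    rfl

variable [LinearOrder α] [IsOrderedAddMonoid α]

lemma psum_sortAsc_le_sum (x : Fin n → α) (S : Finset (Fin n)) :
    psum (sortAsc x) #S ≤ ∑ j ∈ S, x j := by
  obtain ⟨T, hTcard, hT, hsum⟩ := exists_psum_sortAsc_eq_sum x (card_finset_fin_le S)
  rw [hsum]
  exact sum_le_sum_of_forall_le_of_card_eq hT hTcard

lemma psum_sortAsc_eq_sum_of_forall_le (x : Fin n → α) {T : Finset (Fin n)}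
    (hT : ∀ j ∈ T, ∀ j' ∉ T, x j ≤ x j') : psum (sortAsc x) #T = ∑ j ∈ T, x j := by
  obtain ⟨T', hT'card, hT', hsum⟩ := exists_psum_sortAsc_eq_sum x (card_finset_fin_le T)
  rw [hsum]
  exact le_antisymm (sum_le_sum_of_forall_le_of_card_eq hT' hT'card)
    (sum_le_sum_of_forall_le_of_card_eq hT hT'card.symm)

end SortedPartialSums

section Conjugate

variable {m n : ℕ} (r : Fin m → ℕ)

lemma conj_antitone : Antitone (conj r n) := fun _ _ hj =>
  card_le_card <| monotone_filter_right _ fun _ _ h => (Nat.add_le_add_right hj 1).trans h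

lemma card_filter_fin_le_and_lt {a b : ℕ} (hb : b ≤ n) :
    #{j : Fin n | a ≤ (j : ℕ) ∧ (j : ℕ) < b} = b - a := by
  rw [← Nat.card_Ico, ← card_map Fin.valEmbedding]
  congr 1
  ext j
  simp only [mem_map, mem_filter, mem_univ, true_and, Fin.valEmbedding_apply, mem_Ico]
  exact ⟨fun ⟨i, hi, hij⟩ => hij ▸ hi, fun hj => ⟨⟨j, by omega⟩, hj, rfl⟩⟩

lemma sum_conj_eq_sum_card (T : Finset (Fin n)) :
    ∑ j ∈ T, conj r n j = ∑ i, #{j ∈ T | j.val < r i} :=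
  (sum_card_bipartiteAbove_eq_sum_card_bipartiteBelow (fun i (j : Fin n) => (j : ℕ) < r i)).symm

lemma psum_sortAsc_conj (hr : ∀ i, r i ≤ n) {k : ℕ} (hk : k ≤ n) :
    psum (sortAsc (conj r n)) k = ∑ i, (r i - (n - k)) := by
  let T : Finset (Fin n) := {j | n - k ≤ (j : ℕ)}
  have hT : #T = k := by
    have h := card_filter_fin_le_and_lt (n := n) (a := n - k) le_rfl
    simp only [Fin.is_lt, and_true] at h
    exact h.trans (by omega)
  have hbottom : ∀ j ∈ T, ∀ j' ∉ T, conj r n j ≤ conj r n j' := by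
    simp only [T, mem_filter, mem_univ, true_and, not_le]
    exact fun j hj j' hj' => conj_antitone r (by omega)
  rw [← hT, psum_sortAsc_eq_sum_of_forall_le _ hbottom, sum_conj_eq_sum_card]
  refine sum_congr rfl fun i _ => ?_
  rw [filter_filter, card_filter_fin_le_and_lt (hr i), hT]

end Conjugate

section TopRows

variable {ι : Type*} [Fintype ι]

lemma sum_tsub_eq_sum_tsub_succ_add_card (r : ι → ℕ) (t : ℕ) :
    ∑ i, (r i - t) = ∑ i, (r i - (t + 1)) + #{i | t < r i} := by
  rw [card_filter, ← sum_add_distrib]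
  exact sum_congr rfl fun i _ => by split_ifs <;> omega

variable [DecidableEq ι]

lemma sum_tsub_indicator_add_card (r : ι → ℕ) (D : Finset ι) (t : ℕ) :
    ∑ i, (r i - (if i ∈ D then 1 else 0) - t) + #{i ∈ D | t < r i} = ∑ i, (r i - t) := by
  rw [card_filter, ← sum_filter_add_sum_filter_not univ (· ∈ D) (fun i => r i - _ - t),
    ← sum_filter_add_sum_filter_not univ (· ∈ D) (fun i => r i - t), filter_mem_eq_inter,
    univ_inter, add_right_comm, ← sum_add_distrib]
  congr 1
  · exact sum_congr rfl fun i hi => by simp only [if_pos hi]; split_ifs <;> omega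
  · exact sum_congr rfl fun i hi => by simp only [(mem_filter.1 hi).2, if_false, Nat.sub_zero]

variable {r : ι → ℕ} {D : Finset ι} (hD : ∀ i ∈ D, ∀ i' ∉ D, r i' ≤ r i)
include hD

lemma forall_mem_lt_or_lt_imp_mem (t : ℕ) : (∀ i ∈ D, t < r i) ∨ ∀ i, t < r i → i ∈ D := by
  by_contra! h
  obtain ⟨⟨i, hiD, hi⟩, ⟨i', hi', hi'D⟩⟩ := h
  exact absurd (hD i hiD i' hi'D) (by omega)

lemma card_filter_lt_of_forall_le (t : ℕ) : #{i ∈ D | t < r i} = min #D #{i | t < r i} := by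
  rcases forall_mem_lt_or_lt_imp_mem hD t with h | h
  · rw [filter_true_of_mem h, min_eq_left]
    exact card_le_card fun i hi => by simpa using h i hi
  · have : {i ∈ D | t < r i} = ({i | t < r i} : Finset ι) := by
      ext i
      simpa using h i
    rw [this, min_eq_right (card_le_card fun i hi => h i (by simpa using hi))]

lemma lt_of_mem_of_card_le {t : ℕ} (hcard : #D ≤ #{i | t < r i}) : ∀ i ∈ D, t < r i := by
  rcases forall_mem_lt_or_lt_imp_mem hD t with h | h
  · exact h
  · have hsub : ({i | t < r i} : Finset ι) ⊆ D := fun i hi => h i (by simpa using hi)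
    exact fun i hi => by simpa using (eq_of_subset_of_card_le hsub hcard).ge hi

end TopRows

lemma exists_card_eq_forall_le {m : ℕ} (r : Fin m → ℕ) {d : ℕ} (hd : d ≤ m) :
    ∃ D : Finset (Fin m), #D = d ∧ ∀ i ∈ D, ∀ i' ∉ D, r i' ≤ r i := by
  obtain ⟨T, hTcard, hT, -⟩ := exists_psum_sortAsc_eq_sum r (Nat.sub_le m d)
  refine ⟨Tᶜ, by rw [card_compl, Fintype.card_fin, hTcard]; omega, fun i hi i' hi' => ?_⟩
  exact hT i' (by simpa using hi') i (mem_compl.1 hi)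

def CutCondition {m n : ℕ} (r : Fin m → ℕ) (c : Fin n → ℕ) : Prop :=
  ∀ S : Finset (Fin n), ∑ i, (r i - (n - #S)) ≤ ∑ j ∈ S, c j

section CutCondition

variable {m n : ℕ} {r : Fin m → ℕ} {c : Fin n → ℕ}

lemma cutCondition_of_matrix (A : Fin m → Fin n → ℕ) (h01 : ∀ i j, A i j = 0 ∨ A i j = 1)
    (hrow : ∀ i, ∑ j, A i j = r i) (hcol : ∀ j, ∑ i, A i j ≤ c j) : CutCondition r c := by
  intro S
  have hrowS : ∀ i, r i - (n - #S) ≤ ∑ j ∈ S, A i j := by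
    intro i
    have hout : ∑ j ∈ Sᶜ, A i j ≤ n - #S := calc
      ∑ j ∈ Sᶜ, A i j ≤ ∑ j ∈ Sᶜ, 1 := sum_le_sum fun j _ => by rcases h01 i j with h | h <;> omega
      _ = n - #S := by simp [card_compl]
    have := sum_add_sum_compl S (A i)
    have := hrow i
    omega
  calc ∑ i, (r i - (n - #S)) ≤ ∑ i, ∑ j ∈ S, A i j := sum_le_sum fun i _ => hrowS i
    _ = ∑ j ∈ S, ∑ i, A i j := sum_comm
    _ ≤ ∑ j ∈ S, c j := sum_le_sum fun j _ => hcol j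

lemma CutCondition.rowSum_le (hc : CutCondition r c) (i : Fin m) : r i ≤ n := by
  have h := sum_eq_zero_iff.1 (Nat.le_zero.1 (by simpa using hc ∅)) i (mem_univ i)
  omega

lemma cutCondition_iff_weakSuper (hr : ∀ i, r i ≤ n) :
    CutCondition r c ↔ WeakSuper c (conj r n) := by
  constructor
  · intro h k
    wlog hk : k ≤ n generalizing k
    · rw [psum_eq_sum_of_le _ (le_of_not_ge hk), psum_eq_sum_of_le _ (le_of_not_ge hk),
        ← psum_eq_sum_of_le _ le_rfl, ← psum_eq_sum_of_le (sortAsc c) le_rfl]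
      exact this n le_rfl
    obtain ⟨S, rfl, -, hS⟩ := exists_psum_sortAsc_eq_sum c hk
    rw [psum_sortAsc_conj r hr hk, hS]
    exact h S
  · intro h S
    calc ∑ i, (r i - (n - #S)) = psum (sortAsc (conj r n)) #S :=
          (psum_sortAsc_conj r hr (card_finset_fin_le S)).symm
      _ ≤ psum (sortAsc c) #S := h #S
      _ ≤ ∑ j ∈ S, c j := psum_sortAsc_le_sum c S

end CutCondition

/-- Either every row with more than `t = n - #S` ones gets a one in column `0`, or column `0` is
full; accordingly the cut for `S` follows from the original cut for `S` or for `insert 0 S`. -/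
lemma CutCondition.peel {m n : ℕ} {r : Fin m → ℕ} {c : Fin (n + 1) → ℕ} (hc : CutCondition r c)
    {D : Finset (Fin m)} (hD : ∀ i ∈ D, ∀ i' ∉ D, r i' ≤ r i)
    (hDcard : #D = min (c 0) #{i | 0 < r i}) :
    CutCondition (fun i => r i - if i ∈ D then 1 else 0) (Fin.tail c) := by
  intro S
  beta_reduce
  set t := n - #S
  have hS : #S ≤ n := card_finset_fin_le S
  have hFp : #{i | t < r i} ≤ #{i | 0 < r i} :=
    card_le_card fun i => by simp only [mem_filter, mem_univ, true_and]; omega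
  have hpeel : ∑ i, (r i - (if i ∈ D then 1 else 0) - t) + min (c 0) #{i | t < r i} =
      ∑ i, (r i - t) := by
    rw [← sum_tsub_indicator_add_card r D t, card_filter_lt_of_forall_le hD, hDcard, min_assoc,
      min_eq_right hFp]
  have hsucc := sum_tsub_eq_sum_tsub_succ_add_card r t
  have hmap : ∑ j ∈ S.map (Fin.succEmb n), c j = ∑ j ∈ S, Fin.tail c j := sum_map _ _ _
  have h0 : 0 ∉ S.map (Fin.succEmb n) := by simp [Fin.succ_ne_zero]
  rcases le_total #{i | t < r i} (c 0) with h | h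
  · have hcS := hc (S.map (Fin.succEmb n))
    rw [card_map, hmap, show n + 1 - #S = t + 1 by omega] at hcS
    rw [min_eq_right h] at hpeel
    omega
  · have hcS := hc (insert 0 (S.map (Fin.succEmb n)))
    rw [card_insert_of_notMem h0, sum_insert h0, card_map, hmap,
      show n + 1 - (#S + 1) = t by omega] at hcS
    rw [min_eq_left h] at hpeel
    omega

theorem CutCondition.exists_matrix : ∀ {n m : ℕ} {r : Fin m → ℕ} {c : Fin n → ℕ},
    CutCondition r c → ∃ A : Fin m → Fin n → ℕ,
      (∀ i j, A i j = 0 ∨ A i j = 1) ∧ (∀ i, ∑ j, A i j = r i) ∧ (∀ j, ∑ i, A i j ≤ c j)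
  | 0, _, r, _, hc =>
    ⟨0, fun _ _ => Or.inl rfl, fun i => by simp [Nat.le_zero.1 (hc.rowSum_le i)], fun j => j.elim0⟩
  | n + 1, m, r, c, hc => by
    obtain ⟨D, hDcard, hD⟩ := exists_card_eq_forall_le r
      ((min_le_right (c 0) _).trans (card_finset_fin_le {i | 0 < r i}))
    have hpos : ∀ i ∈ D, 0 < r i := lt_of_mem_of_card_le hD (hDcard ▸ min_le_right _ _)
    obtain ⟨A, h01, hrow, hcol⟩ := (hc.peel hD hDcard).exists_matrix
    refine ⟨fun i => Fin.cons (if i ∈ D then 1 else 0) (A i), fun i j => ?_, fun i => ?_,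
      fun j => ?_⟩
    · cases j using Fin.cases with
      | zero => simp only [Fin.cons_zero]; split_ifs <;> simp
      | succ j => exact h01 i j
    · rw [Fin.sum_univ_succ]
      simp only [Fin.cons_zero, Fin.cons_succ, hrow]
      split_ifs with hi
      · have := hpos i hi
        omega
      · omega
    · cases j using Fin.cases with
      | zero =>
        simp only [Fin.cons_zero, sum_boole, Nat.cast_id, filter_mem_eq_inter, univ_inter, hDcard]
        exact min_le_left _ _
      | succ j => exact hcol j

theorem stmt_12 {m n : ℕ} (r : Fin m → ℕ) (c : Fin n → ℕ) (hr : ∀ i, r i ≤ n) :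
    (∃ A : Fin m → Fin n → ℕ,
        (∀ i j, A i j = 0 ∨ A i j = 1) ∧
        (∀ i, ∑ j, A i j = r i) ∧
        (∀ j, ∑ i, A i j ≤ c j)) ↔
    WeakSuper c (conj r n) := by
  rw [← cutCondition_iff_weakSuper hr]
  exact ⟨fun ⟨A, h01, hrow, hcol⟩ => cutCondition_of_matrix A h01 hrow hcol,
    CutCondition.exists_matrix⟩
end

section
/- Let b ∈ ℕ^n be nonincreasing and r ∈ ℕ^m, and set V = {b + x : x ∈ ℕ^n, x ≺ r*}. If u and v are both minimal elements of V under majorization (i.e., no element of V strictly majorizes below them), then u ≺ w and v ≺ w for every w ∈ V, and u is a rearrangement of v. -/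
open Finset

/-!
The vectors `x ≺ c` in `ℕ^n` are exactly the integral bases of the polymatroid on `Fin n` whose
rank of `S` is the sum of the `#S` largest entries of `c`; this rank function is submodular because
it depends concavely on `#S`. Choose a base `x` minimising `∑ i, (b i + x i) ^ 2`: no feasible unit
transfer `x ↦ x - e s + e t` can then go from an entry of `b + x` to one smaller by at least two.
For any other base `y`, the polymatroid exchange property yields `p, q` with `x p < y p`,
`y q < x q` such that both `y - e p + e q` and `x - e q + e p` are bases; by the choice of `x`,
the first move is a transfer from a larger to a smaller entry of `b + y`, so it goes down in
majorization while getting closer to `x`. Hence `b + x` lies below every element of `V`, so does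
every minimal element, and two minimal elements majorize each other.
-/

section Sorting

variable {n : ℕ} {α : Type*}

def descPerm [LinearOrder α] (x : Fin n → α) : Equiv.Perm (Fin n) :=
  Fin.revPerm.trans (Tuple.sort x)

theorem sortDesc_eq_comp [LinearOrder α] (x : Fin n → α) : sortDesc x = x ∘ descPerm x := rfl

theorem sortDesc_antitone [LinearOrder α] (x : Fin n → α) : Antitone (sortDesc x) :=
  fun _ _ hij => Tuple.monotone_sort x (Fin.rev_le_rev.mpr hij)

theorem sum_sortDesc [LinearOrder α] [AddCommMonoid α] (x : Fin n → α) :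
    ∑ i, sortDesc x i = ∑ i, x i :=
  Equiv.sum_comp (descPerm x) x

theorem psum_eq_sum_filter [AddCommMonoid α] (f : Fin n → α) (k : ℕ) :
    psum f k = ∑ i : Fin n with i.val < k, f i :=
  (sum_filter _ _).symm

theorem psum_of_le [AddCommMonoid α] (f : Fin n → α) {k : ℕ} (h : n ≤ k) :
    psum f k = ∑ i, f i :=
  sum_congr rfl fun i _ => if_pos (i.isLt.trans_le h)

theorem psum_succ [AddCommMonoid α] (f : Fin n → α) {k : ℕ} (h : k < n) :
    psum f (k + 1) = psum f k + f ⟨k, h⟩ := by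
  have split (i : Fin n) : (if (i : ℕ) < k + 1 then f i else 0)
      = (if (i : ℕ) < k then f i else 0) + if i = ⟨k, h⟩ then f i else 0 := by
    split_ifs <;> simp_all [Fin.ext_iff] <;> omega
  simp only [psum, split, sum_add_distrib, sum_ite_eq', mem_univ, if_true]

theorem psum_mono (f : Fin n → ℕ) : Monotone (psum f) :=
  fun _ _ hkl => sum_le_sum fun i _ => by split_ifs <;> omega

theorem sum_le_psum_of_antitone {d : Fin n → ℕ} (hd : Antitone d) (T : Finset (Fin n)) :
    ∑ i ∈ T, d i ≤ psum d #T := by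
  induction T using Finset.induction_on_max with
  | empty => simp
  | insert a s hlt ih =>
    have hs : #s ≤ a := by
      simpa using card_le_card fun i hi => mem_Iio.mpr (hlt i hi)
    have ha : a ∉ s := fun h => lt_irrefl a (hlt a h)
    rw [sum_insert ha, card_insert_of_notMem ha, psum_succ d (hs.trans_lt a.isLt)]
    have : d a ≤ d ⟨#s, hs.trans_lt a.isLt⟩ := hd (Fin.mk_le_of_le_val hs)
    omega

end Sorting

section TopSum

variable {n : ℕ}

def topSum (x : Fin n → ℕ) (k : ℕ) : ℕ := psum (sortDesc x) k

theorem topSum_mono (x : Fin n → ℕ) : Monotone (topSum x) := psum_mono _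

theorem topSum_of_le (x : Fin n → ℕ) {k : ℕ} (h : n ≤ k) : topSum x k = ∑ i, x i := by
  rw [topSum, psum_of_le _ h, sum_sortDesc]

theorem topSum_zero (x : Fin n → ℕ) : topSum x 0 = 0 := by simp [topSum, psum]

theorem sum_le_topSum (x : Fin n → ℕ) (S : Finset (Fin n)) : ∑ i ∈ S, x i ≤ topSum x #S := by
  have h := sum_le_psum_of_antitone (sortDesc_antitone x) (S.map (descPerm x).symm.toEmbedding)
  simpa [sortDesc_eq_comp, topSum] using h

theorem exists_card_eq_topSum_eq_sum (x : Fin n → ℕ) (k : ℕ) :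
    ∃ S : Finset (Fin n), #S = min k n ∧ topSum x k = ∑ i ∈ S, x i :=
  ⟨(univ.filter fun i : Fin n => (i : ℕ) < k).map (descPerm x).toEmbedding,
    by rw [card_map, Fin.card_filter_val_lt, min_comm],
    by rw [topSum, psum_eq_sum_filter, sum_map]; rfl⟩

theorem topSum_succ (x : Fin n → ℕ) (k : ℕ) :
    topSum x (k + 1) = topSum x k + if h : k < n then sortDesc x ⟨k, h⟩ else 0 := by
  by_cases h : k < n
  · rw [topSum, topSum, psum_succ _ h, dif_pos h]
  · rw [topSum_of_le x (by omega), topSum_of_le x (by omega), dif_neg h, add_zero]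

theorem topSum_succ_add_le (x : Fin n → ℕ) {k l : ℕ} (h : k ≤ l) :
    topSum x (l + 1) + topSum x k ≤ topSum x l + topSum x (k + 1) := by
  have : (if h : l < n then sortDesc x ⟨l, h⟩ else 0)
      ≤ if h : k < n then sortDesc x ⟨k, h⟩ else 0 := by
    split_ifs with hl hk
    · exact sortDesc_antitone x (Fin.mk_le_mk.mpr h)
    all_goals omega
  rw [topSum_succ, topSum_succ]
  omega

theorem topSum_add_add_le (x : Fin n → ℕ) {k l : ℕ} (h : k ≤ l) (d : ℕ) :
    topSum x (l + d) + topSum x k ≤ topSum x l + topSum x (k + d) := by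
  induction d with
  | zero => simp [add_comm]
  | succ d ih =>
    have := topSum_succ_add_le x (by omega : k + d ≤ l + d)
    rw [← add_assoc, ← add_assoc]
    omega

theorem topSum_card_union_add_inter (x : Fin n → ℕ) (A B : Finset (Fin n)) :
    topSum x #(A ∪ B) + topSum x #(A ∩ B) ≤ topSum x #A + topSum x #B := by
  obtain ⟨d, hd⟩ := Nat.exists_eq_add_of_le (card_le_card (subset_union_left : A ⊆ A ∪ B))
  have hB : #B = #(A ∩ B) + d := by have := card_union_add_card_inter A B; omega
  rw [hd, hB]
  exact topSum_add_add_le x (card_le_card inter_subset_left) d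

end TopSum

section Majorization

variable {n : ℕ} {α : Type*}

theorem Maj.refl [AddCommMonoid α] [LinearOrder α] [IsOrderedAddMonoid α] (x : Fin n → α) :
    Maj x x :=
  ⟨fun _ => le_rfl, rfl⟩

theorem Maj.trans [AddCommMonoid α] [LinearOrder α] [IsOrderedAddMonoid α] {x y z : Fin n → α}
    (hxy : Maj x y) (hyz : Maj y z) : Maj x z :=
  ⟨fun k => (hxy.1 k).trans (hyz.1 k), hxy.2.trans hyz.2⟩

theorem Maj.sortDesc_eq [AddCancelCommMonoid α] [LinearOrder α] [IsOrderedAddMonoid α]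
    {x y : Fin n → α} (hxy : Maj x y) (hyx : Maj y x) : sortDesc x = sortDesc y := by
  funext i
  have hk := le_antisymm (hxy.1 i) (hyx.1 i)
  have hk1 := le_antisymm (hxy.1 (i + 1)) (hyx.1 (i + 1))
  rw [psum_succ _ i.isLt, psum_succ _ i.isLt, hk] at hk1
  exact add_left_cancel hk1

end Majorization

section Polymatroid

variable {n : ℕ} {c x y : Fin n → ℕ}

/-- `x` is a base of the polymatroid on `Fin n` with rank function `S ↦ topSum c #S`. -/
def IsBase (c x : Fin n → ℕ) : Prop :=
  (∀ S : Finset (Fin n), ∑ i ∈ S, x i ≤ topSum c #S) ∧ ∑ i, x i = ∑ i, c i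

theorem maj_iff_isBase : Maj x c ↔ IsBase c x := by
  refine ⟨fun h => ⟨fun S => (sum_le_topSum x S).trans (h.1 #S), h.2⟩, fun h => ⟨fun k => ?_, h.2⟩⟩
  obtain ⟨S, hS, hsum⟩ := exists_card_eq_topSum_eq_sum x k
  calc topSum x k = ∑ i ∈ S, x i := hsum
    _ ≤ topSum c #S := h.1 S
    _ ≤ topSum c k := topSum_mono c (hS.trans_le (min_le_left k n))

def Tight (c x : Fin n → ℕ) (S : Finset (Fin n)) : Prop := ∑ i ∈ S, x i = topSum c #S

theorem Tight.inter_union {A B : Finset (Fin n)} (hx : IsBase c x) (hA : Tight c x A)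
    (hB : Tight c x B) : Tight c x (A ∩ B) ∧ Tight c x (A ∪ B) := by
  have hsum : ∑ i ∈ A ∪ B, x i + ∑ i ∈ A ∩ B, x i = ∑ i ∈ A, x i + ∑ i ∈ B, x i :=
    sum_union_inter
  have hsub := topSum_card_union_add_inter c A B
  have := hx.1 (A ∪ B)
  have := hx.1 (A ∩ B)
  unfold Tight at *
  omega

theorem tight_sup (hx : IsBase c x) {𝒮 : Finset (Finset (Fin n))}
    (h𝒮 : ∀ S ∈ 𝒮, Tight c x S) : Tight c x (𝒮.sup id) :=
  sup_induction (by simp [Tight, topSum_zero]) (fun _ hA _ hB => (hA.inter_union hx hB).2) h𝒮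

theorem tight_inf (hx : IsBase c x) {𝒮 : Finset (Finset (Fin n))}
    (h𝒮 : ∀ S ∈ 𝒮, Tight c x S) : Tight c x (𝒮.inf id) :=
  inf_induction (by simpa [Tight, topSum_of_le] using hx.2)
    (fun _ hA _ hB => (hA.inter_union hx hB).1) h𝒮

theorem sum_sdiff_le_of_tight {U W : Finset (Fin n)} (hx : IsBase c x) (hy : IsBase c y)
    (hW : Tight c x W) (hU : Tight c y U) : ∑ i ∈ W \ U, y i ≤ ∑ i ∈ W \ U, x i := by
  have hxW : ∑ i ∈ W \ U, x i + ∑ i ∈ W ∩ U, x i = ∑ i ∈ W, x i := by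
    rw [← sdiff_inter_self_left W U]
    exact sum_sdiff inter_subset_left
  have hyU : ∑ i ∈ W \ U, y i + ∑ i ∈ U, y i = ∑ i ∈ W ∪ U, y i := by
    rw [← union_sdiff_right]
    exact sum_sdiff subset_union_right
  have hsub := topSum_card_union_add_inter c W U
  have := hx.1 (W ∩ U)
  have := hy.1 (W ∪ U)
  unfold Tight at hW hU
  omega

end Polymatroid

section Transfer

variable {n : ℕ} {c x y : Fin n → ℕ} {p q : Fin n}

-- Moves one unit from `p` to `q`; it is only used when `1 ≤ y p`, where the truncated
-- subtraction is exact.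
def transfer (y : Fin n → ℕ) (p q : Fin n) : Fin n → ℕ :=
  fun i => y i + (if i = q then 1 else 0) - (if i = p then 1 else 0)

theorem transfer_apply_left (hpq : p ≠ q) : transfer y p q p = y p - 1 := by
  simp [transfer, hpq]

theorem transfer_apply_right (hpq : p ≠ q) : transfer y p q q = y q + 1 := by
  simp [transfer, hpq.symm]

theorem transfer_apply_of_ne {i : Fin n} (hip : i ≠ p) (hiq : i ≠ q) : transfer y p q i = y i := by
  simp [transfer, hip, hiq]

theorem add_transfer (b : Fin n → ℕ) (hp : 1 ≤ y p) : b + transfer y p q = transfer (b + y) p q := by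
  funext i
  simp only [transfer, Pi.add_apply]
  split_ifs <;> subst_vars <;> omega

theorem sum_transfer_add (hp : 1 ≤ y p) (S : Finset (Fin n)) :
    ∑ i ∈ S, transfer y p q i + (if p ∈ S then 1 else 0)
      = ∑ i ∈ S, y i + (if q ∈ S then 1 else 0) := by
  have hpt (i : Fin n) :
      transfer y p q i + (if i = p then 1 else 0) = y i + (if i = q then 1 else 0) := by
    unfold transfer
    split_ifs <;> simp_all
  have := sum_congr rfl fun i (_ : i ∈ S) => hpt i
  rwa [sum_add_distrib, sum_add_distrib, sum_ite_eq' S p, sum_ite_eq' S q] at this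

theorem sum_transfer (hp : 1 ≤ y p) : ∑ i, transfer y p q i = ∑ i, y i := by
  simpa using sum_transfer_add (q := q) hp univ

theorem maj_transfer {w : Fin n → ℕ} (h : w q < w p) : Maj (transfer w p q) w := by
  have hp : 1 ≤ w p := by omega
  refine maj_iff_isBase.2 ⟨fun S => ?_, sum_transfer hp⟩
  have hsum := sum_transfer_add (q := q) hp S
  by_cases hswap : q ∈ S ∧ p ∉ S
  · obtain ⟨hqS, hpS⟩ := hswap
    have hp' : p ∉ S.erase q := fun hmem => hpS (mem_of_mem_erase hmem)
    have hcard : #(insert p (S.erase q)) = #S := by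
      rw [card_insert_of_notMem hp', card_erase_of_mem hqS]
      have := card_pos.2 ⟨q, hqS⟩
      omega
    have hS := add_sum_erase S w hqS
    have hS' := sum_insert (f := w) hp'
    have := sum_le_topSum w (insert p (S.erase q))
    simp only [hqS, hpS, if_true, if_false] at hsum
    rw [hcard] at this
    omega
  · have := sum_le_topSum w S
    rw [not_and_or, not_not] at hswap
    rcases hswap with hqS | hpS
    · simp only [hqS, if_false] at hsum
      split_ifs at hsum <;> omega
    · simp only [hpS, if_true] at hsum
      split_ifs at hsum <;> omega

theorem sum_sq_transfer_lt {z : Fin n → ℕ} (hpq : p ≠ q) (h : z q + 2 ≤ z p) :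
    ∑ i, transfer z p q i ^ 2 < ∑ i, z i ^ 2 := by
  have hq : q ∈ univ.erase p := mem_erase.2 ⟨hpq.symm, mem_univ q⟩
  have hrest : ∑ i ∈ (univ.erase p).erase q, transfer z p q i ^ 2
      = ∑ i ∈ (univ.erase p).erase q, z i ^ 2 :=
    sum_congr rfl fun i hi => by
      rw [transfer_apply_of_ne (ne_of_mem_erase (mem_of_mem_erase hi)) (ne_of_mem_erase hi)]
  rw [← add_sum_erase univ (fun i => transfer z p q i ^ 2) (mem_univ p),
    ← add_sum_erase _ (fun i => transfer z p q i ^ 2) hq, hrest,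
    ← add_sum_erase univ (fun i => z i ^ 2) (mem_univ p),
    ← add_sum_erase _ (fun i => z i ^ 2) hq, transfer_apply_left hpq, transfer_apply_right hpq]
  obtain ⟨a, ha⟩ : ∃ a, z p = a + 1 := ⟨z p - 1, by omega⟩
  have : (z p - 1) ^ 2 + (z q + 1) ^ 2 < z p ^ 2 + z q ^ 2 := by
    have : z q < a := by omega
    rw [ha, Nat.add_sub_cancel]
    nlinarith
  omega

theorem exists_tight_of_not_isBase_transfer (hy : IsBase c y) (hp : 1 ≤ y p)
    (h : ¬ IsBase c (transfer y p q)) : ∃ S, Tight c y S ∧ q ∈ S ∧ p ∉ S := by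
  obtain ⟨S, hS⟩ : ∃ S : Finset (Fin n), topSum c #S < ∑ i ∈ S, transfer y p q i := by
    simpa [IsBase, sum_transfer hp, hy.2] using h
  have hsum := sum_transfer_add (q := q) hp S
  have hle := hy.1 S
  have hqS : q ∈ S := by
    by_contra hqS
    simp only [hqS, if_false] at hsum
    split_ifs at hsum <;> omega
  have hpS : p ∉ S := by
    intro hpS
    simp only [hqS, hpS, if_true] at hsum
    omega
  simp only [hqS, hpS, if_true, if_false] at hsum
  exact ⟨S, by unfold Tight; omega, hqS, hpS⟩

theorem exists_exchange (hx : IsBase c x) (hy : IsBase c y) (hp : x p < y p) :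
    ∃ q, y q < x q ∧ IsBase c (transfer y p q) ∧ IsBase c (transfer x q p) := by
  classical
  by_contra! h
  -- `U` is the largest `y`-tight set avoiding `p`, `W` the smallest `x`-tight set containing `p`;
  -- every `q` with `y q < x q` lies in `U` or outside `W`, so `x ≤ y` on `W \ U`, strictly at `p`.
  set U := (univ.filter fun S : Finset (Fin n) => Tight c y S ∧ p ∉ S).sup id
  set W := (univ.filter fun S : Finset (Fin n) => Tight c x S ∧ p ∈ S).inf id
  have hU : Tight c y U := tight_sup hy fun S hS => (mem_filter.1 hS).2.1
  have hW : Tight c x W := tight_inf hx fun S hS => (mem_filter.1 hS).2.1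
  have hpU : p ∉ U := by simp [U, mem_sup]
  have hpW : p ∈ W := by simp [W, mem_inf]
  have hle : ∀ i ∈ W \ U, x i ≤ y i := by
    intro q hq
    obtain ⟨hqW, hqU⟩ := mem_sdiff.1 hq
    by_contra! hlt
    by_cases hb : IsBase c (transfer y p q)
    · obtain ⟨S, hS, hpS, hqS⟩ := exists_tight_of_not_isBase_transfer hx (by omega) (h q hlt hb)
      have hWS : W ⊆ S := inf_le (f := id) (mem_filter.2 ⟨mem_univ _, hS, hpS⟩)
      exact hqS (hWS hqW)
    · obtain ⟨S, hS, hqS, hpS⟩ := exists_tight_of_not_isBase_transfer hy (by omega) hb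
      have hSU : S ⊆ U := le_sup (f := id) (mem_filter.2 ⟨mem_univ _, hS, hpS⟩)
      exact hqU (hSU hqS)
  have hlt : ∑ i ∈ W \ U, x i < ∑ i ∈ W \ U, y i :=
    sum_lt_sum hle ⟨p, mem_sdiff.2 ⟨hpW, hpU⟩, hp⟩
  exact hlt.not_ge (sum_sdiff_le_of_tight hx hy hW hU)

end Transfer

section LeastElement

variable {n : ℕ} {b c x : Fin n → ℕ}

theorem maj_add_of_forall_transfer (hx : IsBase c x)
    (hloc : ∀ s t, 1 ≤ x s → IsBase c (transfer x s t) → b s + x s ≤ b t + x t + 1)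
    {y : Fin n → ℕ} (hy : IsBase c y) : Maj (b + x) (b + y) := by
  obtain ⟨N, hN⟩ : ∃ N, ∑ i, (y i - x i) = N := ⟨_, rfl⟩
  induction N using Nat.strong_induction_on generalizing y with
  | _ N ih =>
  by_cases hxy : x = y
  · exact hxy ▸ Maj.refl _
  obtain ⟨p, hp⟩ : ∃ p, x p < y p := by
    by_contra! hge
    have := (sum_eq_sum_iff_of_le fun i _ => hge i).1 (hy.2.trans hx.2.symm)
    exact hxy (funext fun i => (this i (mem_univ i)).symm)
  obtain ⟨q, hq, hyq, hxq⟩ := exists_exchange hx hy hp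
  have hpq : p ≠ q := by rintro rfl; omega
  have hstep : Maj (b + transfer y p q) (b + y) := by
    have := hloc q p (by omega) hxq
    rw [add_transfer b (by omega : 1 ≤ y p)]
    exact maj_transfer (by simp only [Pi.add_apply]; omega)
  have hdec : ∑ i, (transfer y p q i - x i) < N := by
    rw [← hN]
    refine sum_lt_sum (fun i _ => ?_) ⟨p, mem_univ p, ?_⟩
    · by_cases hip : i = p
      · rw [hip, transfer_apply_left hpq]; omega
      by_cases hiq : i = q
      · rw [hiq, transfer_apply_right hpq]; omega
      rw [transfer_apply_of_ne hip hiq]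
    · rw [transfer_apply_left hpq]; omega
  exact (ih _ hdec hyq rfl).trans hstep

theorem exists_isBase_forall_maj_add (c b : Fin n → ℕ) :
    ∃ x, IsBase c x ∧ ∀ y, IsBase c y → Maj (b + x) (b + y) := by
  have hne : {x | IsBase c x}.Nonempty := ⟨c, maj_iff_isBase.1 (Maj.refl c)⟩
  let energy := fun x : Fin n → ℕ => ∑ i, (b + x) i ^ 2
  refine ⟨_, Function.argminOn_mem energy _ hne,
    fun y hy => maj_add_of_forall_transfer (Function.argminOn_mem energy _ hne) ?_ hy⟩
  intro s t hs hst
  by_contra! hlt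
  have hpq : s ≠ t := by rintro rfl; omega
  have hdrop := sum_sq_transfer_lt (z := b + Function.argminOn energy _ hne) hpq
    (by simp only [Pi.add_apply]; omega)
  rw [← add_transfer b hs] at hdrop
  exact (Function.argminOn_le energy _ hst).not_gt hdrop

end LeastElement

theorem stmt_18_general {m n : ℕ} (b : Fin n → ℕ)
    (r : Fin m → ℕ) (u v : Fin n → ℕ)
    (V : Set (Fin n → ℕ))
    (hV : V = {w | ∃ x : Fin n → ℕ, Maj x (conj r n) ∧ w = fun i => b i + x i})
    (hu : u ∈ V) (hv : v ∈ V)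
    (humin : ∀ w ∈ V, Maj w u → Maj u w)
    (hvmin : ∀ w ∈ V, Maj w v → Maj v w) :
    (∀ w ∈ V, Maj u w ∧ Maj v w) ∧ sortDesc u = sortDesc v := by
  obtain ⟨x, hx, hleast⟩ := exists_isBase_forall_maj_add (conj r n) b
  have hxV : b + x ∈ V := hV ▸ ⟨x, maj_iff_isBase.2 hx, rfl⟩
  have hxle : ∀ w ∈ V, Maj (b + x) w := by
    rw [hV]
    rintro _ ⟨y, hy, rfl⟩
    exact hleast y (maj_iff_isBase.1 hy)
  have below : ∀ u ∈ V, (∀ w ∈ V, Maj w u → Maj u w) → ∀ w ∈ V, Maj u w :=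
    fun u hu humin w hw => (humin _ hxV (hxle u hu)).trans (hxle w hw)
  have hule := below u hu humin
  have hvle := below v hv hvmin
  exact ⟨fun w hw => ⟨hule w hw, hvle w hw⟩, (hule v hv).sortDesc_eq (hvle u hu)⟩

theorem stmt_18 {m n : ℕ} (b : Fin n → ℕ) (hb : Antitone b)
    (r : Fin m → ℕ) (hr : ∀ i, r i ≤ n) (u v : Fin n → ℕ)
    (V : Set (Fin n → ℕ))
    (hV : V = {w | ∃ x : Fin n → ℕ, Maj x (conj r n) ∧ w = fun i => b i + x i})
    (hu : u ∈ V) (hv : v ∈ V)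
    (humin : ∀ w ∈ V, Maj w u → Maj u w)
    (hvmin : ∀ w ∈ V, Maj w v → Maj v w) :
    (∀ w ∈ V, Maj u w ∧ Maj v w) ∧ sortDesc u = sortDesc v :=
  stmt_18_general b r u v V hV hu hv humin hvmin
end
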